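/- arXiv:2501.01091 — 3 statements merged into one kernel-verified Lean document; each statement's English description precedes it below -/
import Mathlib

section
/- For the matrix $M = \begin{pmatrix} 1&1&1\\ 1&1&1\\ 1&1&0 \end{pmatrix}$, we have $\lim_{n\to\infty} \frac{e_3^t M^n (e_1 + e_2)}{e_3^t M^n \mathbf{1}} = \sqrt{3} - 1$, where $e_i$ are standard basis vectors in $\mathbb{R}^3$ and $\mathbf{1} = (1,1,1)^t$. -/
open Filter Matrix

private lemma hs3 : Real.sqrt 3 ^ 2 = 3 := Real.sq_sqrt (by norm_num)

private lemma hs3gt : (1:ℝ) < Real.sqrt 3 := by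
  nlinarith [hs3, Real.sqrt_nonneg 3]

private lemma entries411 (n : ℕ) :
    (!![1,1,1; 1,1,1; 1,1,0] ^ n : Matrix (Fin 3) (Fin 3) ℝ) 2 0
      = ((1 + Real.sqrt 3)^n - (1 - Real.sqrt 3)^n) / (2 * Real.sqrt 3)
    ∧ (!![1,1,1; 1,1,1; 1,1,0] ^ n : Matrix (Fin 3) (Fin 3) ℝ) 2 1
      = ((1 + Real.sqrt 3)^n - (1 - Real.sqrt 3)^n) / (2 * Real.sqrt 3)
    ∧ (!![1,1,1; 1,1,1; 1,1,0] ^ n : Matrix (Fin 3) (Fin 3) ℝ) 2 2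
      = ((Real.sqrt 3 - 1) * (1 + Real.sqrt 3)^n
          + (Real.sqrt 3 + 1) * (1 - Real.sqrt 3)^n) / (2 * Real.sqrt 3) := by
  have hs : Real.sqrt 3 ≠ 0 := by nlinarith [hs3gt]
  induction n with
  | zero =>
    refine ⟨?_, ?_, ?_⟩ <;> simp [Matrix.one_apply] <;> field_simp <;> ring
  | succ n ih =>
    obtain ⟨h0, h1, h2⟩ := ih
    refine ⟨?_, ?_, ?_⟩ <;>
        rw [pow_succ, Matrix.mul_apply, Fin.sum_univ_three, h0, h1, h2] <;>
        simp [Matrix.vecHead, Matrix.vecTail]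
    · ring
    · ring
    · linear_combination (((1 - Real.sqrt 3)^n - (1 + Real.sqrt 3)^n)
        / (2 * Real.sqrt 3)) * hs3

/-- Spread rate computation in Section 4.1.1. -/
theorem spread_rate_section411 :
    let M : Matrix (Fin 3) (Fin 3) ℝ := !![1,1,1; 1,1,1; 1,1,0]
    Tendsto (fun n => ((M ^ n) 2 0 + (M ^ n) 2 1) / ∑ j, (M ^ n) 2 j)
      atTop (nhds (Real.sqrt 3 - 1)) := by
  intro M
  set s := Real.sqrt 3 with hsdef
  have hs1 : (1:ℝ) < s := hs3gt
  have hs0 : s ≠ 0 := by nlinarith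
  have hp : (0:ℝ) < 1 + s := by nlinarith
  set r : ℝ := (1 - s) / (1 + s) with hrdef
  have hrabs : |r| < 1 := by
    rw [abs_div, abs_of_pos hp, div_lt_one hp]
    rw [abs_lt]
    constructor <;> nlinarith
  have hr0 : Tendsto (fun n : ℕ => r ^ n) atTop (nhds 0) :=
    tendsto_pow_atTop_nhds_zero_of_abs_lt_one hrabs
  have hQ : ∀ n : ℕ, (1 - s)^n = r^n * (1 + s)^n := by
    intro n
    rw [← mul_pow, hrdef, div_mul_cancel₀ _ (ne_of_gt hp)]
  -- limit of the model sequence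
  have hlim : Tendsto (fun n : ℕ => (2 - 2 * r^n) / ((1 + s) + (s - 1) * r^n))
      atTop (nhds ((2 - 2 * 0) / ((1 + s) + (s - 1) * 0))) := by
    apply Tendsto.div
    · exact tendsto_const_nhds.sub (hr0.const_mul 2)
    · exact tendsto_const_nhds.add (hr0.const_mul (s - 1))
    · simp; nlinarith
  have hval : (2 - 2 * (0:ℝ)) / ((1 + s) + (s - 1) * 0) = s - 1 := by
    field_simp
    have h3 : s ^ 2 = 3 := hs3
    rw [div_eq_iff (ne_of_gt (by nlinarith))]
    nlinarith [h3]
  rw [hval] at hlim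
  refine hlim.congr fun n => ?_
  obtain ⟨h0, h1, h2⟩ := entries411 n
  have hSabs : |r ^ n| ≤ 1 := by
    rw [abs_pow]
    exact pow_le_one₀ (abs_nonneg r) hrabs.le
  have hSle := abs_le.mp hSabs
  have hPpos : (0:ℝ) < (1 + s)^n := pow_pos hp n
  show (2 - 2 * r^n) / ((1 + s) + (s - 1) * r^n) = _
  rw [Fin.sum_univ_three]
  show _ = (_ + _) / (_ + _ + _)
  rw [h0, h1, h2, hQ n]
  have hd2 : (0:ℝ) < (1 + s) + (s - 1) * r^n := by nlinarith
  have hden : ((1 + s)^n - r^n * (1 + s)^n) / (2 * s)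
      + ((1 + s)^n - r^n * (1 + s)^n) / (2 * s)
      + ((s - 1) * (1 + s)^n + (s + 1) * (r^n * (1 + s)^n)) / (2 * s)
      = (1 + s)^n * ((1 + s) + (s - 1) * r^n) / (2 * s) := by
    field_simp
    ring
  rw [hden, div_eq_div_iff (ne_of_gt hd2) (by positivity)]
  field_simp
  ring
end

section
/- For the matrix $M = \begin{pmatrix} 0&1&1\\ 1&1&0\\ 1&0&1 \end{pmatrix}$, $\lim_{n\to\infty} \frac{e_3^t M^n (e_1 + e_2)}{e_3^t M^n \mathbf{1}} = \frac{2}{3}$, where $e_i$ denote standard basis vectors of $\mathbb{R}^3$ and $\mathbf{1}=(1,1,1)^t$. -/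
open Filter Matrix

lemma spread_key (n : ℕ) :
    let M : Matrix (Fin 3) (Fin 3) ℝ := !![0,1,1; 1,1,0; 1,0,1]
    (M ^ n) 2 0 = ((2:ℝ)^n - (-1)^n)/3 ∧
    (M ^ n) 2 1 = (2:ℝ)^n/3 - 1/2 + (-1)^n/6 ∧
    (M ^ n) 2 2 = (2:ℝ)^n/3 + 1/2 + (-1)^n/6 := by
  intro M
  induction n with
  | zero => norm_num [Matrix.one_apply, Fin.ext_iff]
  | succ n ih =>
    obtain ⟨h0, h1, h2⟩ := ih
    refine ⟨?_, ?_, ?_⟩ <;>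
    · rw [pow_succ, Matrix.mul_apply, Fin.sum_univ_three, h0, h1, h2]
      norm_num [M, Matrix.cons_val_zero, Matrix.cons_val_one, Matrix.cons_val_two, Matrix.vecHead, Matrix.vecTail]
      ring

/-- Spread rate computation in Section 4.1.2. -/
theorem spread_rate_section412 :
    let M : Matrix (Fin 3) (Fin 3) ℝ := !![0,1,1; 1,1,0; 1,0,1]
    Tendsto (fun n => ((M ^ n) 2 0 + (M ^ n) 2 1) / ∑ j, (M ^ n) 2 j)
      atTop (nhds (2/3 : ℝ)) := by
  intro M
  have key := spread_key
  have heq : (fun n => ((M ^ n) 2 0 + (M ^ n) 2 1) / ∑ j, (M ^ n) 2 j)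
      = fun n => 2/3 - (1/2) * (1/2:ℝ)^n - (1/6) * (-1/2:ℝ)^n := by
    funext n
    obtain ⟨h0, h1, h2⟩ := key n
    rw [Fin.sum_univ_three, h0, h1, h2]
    have h2n : (2:ℝ)^n ≠ 0 := by positivity
    have m1 : ((1:ℝ)/2)^n * 2^n = 1 := by rw [← mul_pow]; norm_num
    have m2 : ((-1:ℝ)/2)^n * 2^n = (-1)^n := by
      rw [← mul_pow]; norm_num
    have hd : ((2:ℝ)^n - (-1)^n)/3 + ((2:ℝ)^n/3 - 1/2 + (-1)^n/6)
        + ((2:ℝ)^n/3 + 1/2 + (-1)^n/6) = (2:ℝ)^n := by ring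
    rw [hd, div_eq_iff h2n]
    linear_combination (1/2:ℝ) * m1 + (1/6:ℝ) * m2
  rw [heq]
  have t1 : Tendsto (fun n => ((1:ℝ)/2)^n) atTop (nhds 0) := by
    apply tendsto_pow_atTop_nhds_zero_of_abs_lt_one; rw [abs_of_pos] <;> norm_num
  have t2 : Tendsto (fun n => ((-1:ℝ)/2)^n) atTop (nhds 0) := by
    apply tendsto_pow_atTop_nhds_zero_of_abs_lt_one; rw [abs_div]; norm_num
  have := (tendsto_const_nhds (x := (2/3:ℝ)) (f := atTop)).sub
    ((t1.const_mul (1/2)).add (t2.const_mul (1/6)))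
  simpa [sub_add_eq_sub_sub] using this
end

section
/- For the matrix $M = \begin{pmatrix} 0&1&1&0\\ 0&0&1&1\\ 1&0&1&0\\ 1&0&1&0 \end{pmatrix}$, $\lim_{n\to\infty} \frac{e_4^t M^n (e_1+e_2+e_3)}{e_4^t M^n \mathbf{1}} = \frac{13}{14}$, where $e_i$ are standard basis vectors of $\mathbb{R}^4$ and $\mathbf{1}$ is the all-ones vector. -/
open Filter Matrix

noncomputable def rr (n : ℕ) : ℝ := if n % 3 = 0 then -2 else if n % 3 = 1 then 3 else -1

noncomputable def aa (n : ℕ) : ℝ := (2 ^ (n + 1) + rr n) / 7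

lemma rr_shift (n : ℕ) : rr (n + 3) = rr n := by
  simp [rr, Nat.add_mod_right]

lemma rr_sum (n : ℕ) : rr n + rr (n + 1) + rr (n + 2) = 0 := by
  have h : n % 3 = 0 ∨ n % 3 = 1 ∨ n % 3 = 2 := by omega
  rcases h with h | h | h
  · have h1 : (n + 1) % 3 = 1 := by omega
    have h2 : (n + 2) % 3 = 2 := by omega
    simp [rr, h, h1, h2]; norm_num
  · have h1 : (n + 1) % 3 = 2 := by omega
    have h2 : (n + 2) % 3 = 0 := by omega
    simp [rr, h, h1, h2]; norm_num
  · have h1 : (n + 1) % 3 = 0 := by omega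
    have h2 : (n + 2) % 3 = 1 := by omega
    simp [rr, h, h1, h2]; norm_num

lemma rr_bound (n : ℕ) : |rr n| ≤ 3 := by
  unfold rr; split_ifs <;> norm_num

def MM : Matrix (Fin 4) (Fin 4) ℝ := !![0,1,1,0; 0,0,1,1; 1,0,1,0; 1,0,1,0]

lemma e00 : MM 0 0 = 0 := rfl
lemma e01 : MM 0 1 = 1 := rfl
lemma e02 : MM 0 2 = 1 := rfl
lemma e03 : MM 0 3 = 0 := rfl
lemma e10 : MM 1 0 = 0 := rfl
lemma e11 : MM 1 1 = 0 := rfl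
lemma e12 : MM 1 2 = 1 := rfl
lemma e13 : MM 1 3 = 1 := rfl
lemma e20 : MM 2 0 = 1 := rfl
lemma e21 : MM 2 1 = 0 := rfl
lemma e22 : MM 2 2 = 1 := rfl
lemma e23 : MM 2 3 = 0 := rfl
lemma e30 : MM 3 0 = 1 := rfl
lemma e31 : MM 3 1 = 0 := rfl
lemma e32 : MM 3 2 = 1 := rfl
lemma e33 : MM 3 3 = 0 := rfl

lemma rr1 : rr 1 = 3 := by norm_num [rr]
lemma rr2 : rr 2 = -1 := by norm_num [rr]
lemma rr3 : rr 3 = -2 := by norm_num [rr]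

lemma row_formula (n : ℕ) :
    (MM ^ (n + 3)) 3 0 = aa (n + 3) ∧ (MM ^ (n + 3)) 3 1 = aa (n + 2) ∧
    (MM ^ (n + 3)) 3 2 = (2:ℝ) ^ (n + 2) ∧ (MM ^ (n + 3)) 3 3 = aa (n + 1) := by
  induction n with
  | zero =>
    norm_num [pow_succ, Matrix.mul_apply, Fin.sum_univ_four, aa, rr1, rr2, rr3,
      e00,e01,e02,e03,e10,e11,e12,e13,e20,e21,e22,e23,e30,e31,e32,e33]
  | succ n ih =>
    obtain ⟨h0, h1, h2, h3⟩ := ih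
    have hpow : ∀ j, (MM ^ (n + 1 + 3)) 3 j = ∑ i, (MM ^ (n + 3)) 3 i * MM i j := by
      intro j
      rw [show n + 1 + 3 = (n + 3) + 1 by ring, pow_succ, Matrix.mul_apply]
    have hshift : rr (n + 4) = rr (n + 1) := rr_shift (n + 1)
    have hsum : rr (n + 1) + rr (n + 2) + rr (n + 3) = 0 := rr_sum (n + 1)
    refine ⟨?_, ?_, ?_, ?_⟩ <;>
      rw [hpow, Fin.sum_univ_four, h0, h1, h2, h3] <;>
      simp only [e00,e01,e02,e03,e10,e11,e12,e13,e20,e21,e22,e23,e30,e31,e32,e33,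
        mul_zero, mul_one, zero_add, add_zero] <;>
      simp only [aa, show n + 1 + 3 = n + 4 by ring, show n + 1 + 2 = n + 3 by ring,
        show n + 1 + 1 = n + 2 by ring, show n + 4 + 1 = n + 5 by ring,
        show n + 3 + 1 = n + 4 by ring, show n + 2 + 1 = n + 3 by ring, hshift]
    · field_simp
      ring
    · field_simp
      linear_combination hsum
  
/-- Spread rate computation in Section 4.1.3. -/
theorem spread_rate_section413 :
    let M : Matrix (Fin 4) (Fin 4) ℝ := !![0,1,1,0; 0,0,1,1; 1,0,1,0; 1,0,1,0]
    Tendsto (fun n =>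
        ((M ^ n) 3 0 + (M ^ n) 3 1 + (M ^ n) 3 2) / ∑ j, (M ^ n) 3 j)
      atTop (nhds (13/14 : ℝ)) := by
  intro M
  have hM : M = MM := rfl
  rw [← tendsto_add_atTop_iff_nat 3]
  have heq : (fun n => ((M ^ (n + 3)) 3 0 + (M ^ (n + 3)) 3 1 + (M ^ (n + 3)) 3 2) /
      ∑ j, (M ^ (n + 3)) 3 j)
      = fun n => 13/14 + (- rr (n + 1)) / (7 * 2 ^ (n + 3)) := by
    funext n
    obtain ⟨h0, h1, h2, h3⟩ := row_formula n
    rw [hM, Fin.sum_univ_four, h0, h1, h2, h3]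
    have hsum : rr (n + 1) + rr (n + 2) + rr (n + 3) = 0 := rr_sum (n + 1)
    have hden : aa (n + 3) + aa (n + 2) + (2:ℝ) ^ (n + 2) + aa (n + 1) = 2 ^ (n + 3) := by
      simp only [aa, show n + 3 + 1 = n + 4 by ring, show n + 2 + 1 = n + 3 by ring,
        show n + 1 + 1 = n + 2 by ring]
      field_simp
      linear_combination hsum
    rw [hden]
    have hnum : aa (n + 3) + aa (n + 2) + (2:ℝ) ^ (n + 2) = 2 ^ (n + 3) - aa (n + 1) := by
      linarith [hden]
    rw [hnum]
    have hp : (0:ℝ) < 2 ^ (n + 3) := pow_pos (by norm_num) _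
    simp only [aa, show n + 1 + 1 = n + 2 by ring]
    field_simp
    ring
  rw [heq]
  have h0 : Tendsto (fun n : ℕ => (- rr (n + 1)) / (7 * 2 ^ (n + 3))) atTop (nhds 0) := by
    apply squeeze_zero_norm (a := fun n : ℕ => (1/2 : ℝ) ^ n)
    · intro n
      have hb := rr_bound (n + 1)
      have hp : (0:ℝ) < 2 ^ n := pow_pos (by norm_num) n
      rw [Real.norm_eq_abs, abs_div, abs_neg]
      rw [show ((1:ℝ)/2) ^ n = 1 / 2 ^ n by rw [div_pow]; norm_num]
      have habs : |(7:ℝ) * 2 ^ (n + 3)| = 7 * 2 ^ (n + 3) := abs_of_pos (by positivity)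
      rw [habs, div_le_div_iff₀ (by positivity) hp]
      have h8 : (2:ℝ) ^ (n + 3) = 8 * 2 ^ n := by ring
      nlinarith [hb, hp]
    · exact tendsto_pow_atTop_nhds_zero_of_lt_one (by norm_num) (by norm_num)
  have hfinal := (tendsto_const_nhds :
    Tendsto (fun _ : ℕ => (13/14 : ℝ)) atTop (nhds (13/14))).add h0
  simpa using hfinal
end
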